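/- There exist three strict weak orders on a three-element outcome set that are out of pattern but cannot be layered. Specifically, for O = {x,y,z} and players 1,2,3 with x <₁ y <₁ z, y <₂ z ∼₂ x, and y ∼₃ z <₃ x, the preferences satisfy both the absence of the main pattern and of the secondary pattern, yet no layering of O exists. -/

import Mathlib

namespace SeqGame

inductive GameTree (N O : Type) : Type where
  | leaf (o : O) : GameTree N O
  | node (i : N) (children : List (GameTree N O)) : GameTree N O

namespace GameTree

variable {N O : Type}

/-- The subtree of `T` at position `p` (a list of child indices), if it exists. -/
def subtree : GameTree N O → List ℕ → Option (GameTree N O)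
  | t, [] => some t
  | leaf _, _ :: _ => none
  | node _ c, k :: p =>
    match GetElem?.getElem? c k with
    | some t => subtree t p
    | none => none

/-- A strategy profile: a choice of a child index at every position. -/
abbrev Profile := List ℕ → ℕ

/-- A profile is legal if it chooses an existing child at every internal node. -/
def Legal (T : GameTree N O) (s : Profile) : Prop :=
  ∀ p i c, T.subtree p = some (node i c) → s p < c.length

/-- The profiles `s` and `s'` differ at the (valid, internal) node `p`. -/
def Differs (T : GameTree N O) (s s' : Profile) (p : List ℕ) : Prop :=
  (∃ i c, T.subtree p = some (node i c)) ∧ s p ≠ s' p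

/-- The outcome reached when playing according to the profile `s`. -/
def outcome : GameTree N O → Profile → Option O
  | leaf o, _ => some o
  | node _ c, s =>
    match h : GetElem?.getElem? c (s []) with
    | some t => outcome t (fun p => s (s [] :: p))
    | none => none
decreasing_by
  have hm : t ∈ c := by
    exact List.mem_of_getElem? h
  have := List.sizeOf_lt_of_mem hm
  simp only [node.sizeOf_spec]
  omega

/-- The profile `s` re-rooted at position `p`. -/
def shift (s : Profile) (p : List ℕ) : Profile := fun q => s (p ++ q)

/-- The owner of the node at position `p`, if it is internal. -/
def ownerAt (T : GameTree N O) (p : List ℕ) : Option N :=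
  match T.subtree p with
  | some (node i _) => some i
  | _ => none

/-- `p` lies along the play induced by `s`. -/
def OnPlay (s : Profile) (p : List ℕ) : Prop :=
  ∀ q k, (q ++ [k]) <+: p → s q = k

/-- Improvement property: every player who changes strictly improves the outcome. -/
def Iprop (T : GameTree N O) (pref : N → O → O → Prop) (s s' : Profile) : Prop :=
  ∀ p i c, T.subtree p = some (node i c) → s p ≠ s' p →
    ∃ x y, T.outcome s = some x ∧ T.outcome s' = some y ∧ pref i x y

/-- Subgame improvement property. -/
def SIprop (T : GameTree N O) (pref : N → O → O → Prop) (s s' : Profile) : Prop :=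
  ∀ p i c, T.subtree p = some (node i c) → s p ≠ s' p →
    ∃ x y, outcome (node i c) (shift s p) = some x ∧
      outcome (node i c) (shift s' p) = some y ∧ pref i x y

/-- Laziness property: all changed nodes lie along the play induced by `s'`. -/
def Lprop (T : GameTree N O) (s s' : Profile) : Prop :=
  ∀ p, Differs T s s' p → OnPlay s' p

/-- One player property: at most one player changes his strategy. -/
def P1prop (T : GameTree N O) (s s' : Profile) : Prop :=
  ∃ i : N, ∀ p, Differs T s s' p → T.ownerAt p = some i

/-- Atomicity property: at most one node changes. -/
def Aprop (T : GameTree N O) (s s' : Profile) : Prop :=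
  ∀ p q, Differs T s s' p → Differs T s s' q → p = q

/-- Names of the update properties. -/
inductive Upd : Type | I | SI | L | P1 | A
deriving DecidableEq

/-- Interpretation of an update property name. -/
def holds (T : GameTree N O) (pref : N → O → O → Prop) : Upd → Profile → Profile → Prop
  | .I => Iprop T pref
  | .SI => SIprop T pref
  | .L => Lprop T
  | .P1 => P1prop T
  | .A => Aprop T

/-- The X-dynamics: an actual update (between legal profiles) satisfying
all properties in `X`. -/
def XDyn (X : Set Upd) (T : GameTree N O) (pref : N → O → O → Prop)
    (s s' : Profile) : Prop :=
  Legal T s ∧ Legal T s' ∧ (∃ p, Differs T s s' p) ∧ ∀ u ∈ X, holds T pref u s s'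

/-- A dynamics terminates iff there is no infinite update sequence. -/
def Terminates (D : Profile → Profile → Prop) : Prop :=
  ¬ ∃ f : ℕ → Profile, ∀ n, D (f n) (f (n + 1))

/-- `s'` is a deviation from `s` by the coalition `I`. -/
def Deviation (T : GameTree N O) (I : Set N) (s s' : Profile) : Prop :=
  Legal T s' ∧ ∀ p i c, T.subtree p = some (node i c) → i ∉ I → s p = s' p

/-- Nash equilibrium. -/
def IsNE (T : GameTree N O) (pref : N → O → O → Prop) (s : Profile) : Prop :=
  ∀ i s', Deviation T {i} s s' →
    ∀ x y, T.outcome s = some x → T.outcome s' = some y → ¬ pref i x y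

/-- Subgame perfect equilibrium: an NE in every subgame. -/
def IsSPE (T : GameTree N O) (pref : N → O → O → Prop) (s : Profile) : Prop :=
  ∀ p t, T.subtree p = some t → IsNE t pref (shift s p)

/-- Strong Nash equilibrium (Aumann). -/
def IsSNE (T : GameTree N O) (pref : N → O → O → Prop) (s : Profile) : Prop :=
  ∀ I : Set N, I.Nonempty → ∀ s', Deviation T I s s' →
    ∃ i ∈ I, ∀ x y, T.outcome s = some x → T.outcome s' = some y → ¬ pref i x y

/-- A relation is acyclic if it has no cycle. -/
def Acyclic (r : O → O → Prop) : Prop := ∀ x, ¬ Relation.TransGen r x x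

/-- Incomparability. -/
def Incomp (r : O → O → Prop) (x y : O) : Prop := ¬ r x y ∧ ¬ r y x

/-- Strict weak order: irreflexive, transitive, with transitive incomparability. -/
def IsSWO (r : O → O → Prop) : Prop :=
  (∀ x, ¬ r x x) ∧ (∀ x y z, r x y → r y z → r x z) ∧
    (∀ x y z, Incomp r x y → Incomp r y z → Incomp r x z)

/-- Strict linear order: irreflexive, transitive and total. -/
def IsSLO (r : O → O → Prop) : Prop :=
  (∀ x, ¬ r x x) ∧ (∀ x y z, r x y → r y z → r x z) ∧
    (∀ x y, x ≠ y → r x y ∨ r y x)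

/-- Absence of the main pattern. -/
def OutOfMainPattern (pref : N → O → O → Prop) : Prop :=
  ∀ (i j : N) (x y z : O),
    ¬ (pref i x y ∧ pref i y z ∧ pref j y z ∧ pref j z x)

/-- Absence of the secondary pattern. -/
def OutOfSecondaryPattern (pref : N → O → O → Prop) : Prop :=
  ∀ (i j : N) (w x y z : O),
    ¬ (pref i w x ∧ pref i x y ∧ pref i y z ∧
       Incomp (pref j) x z ∧ pref j z w ∧ Incomp (pref j) w y)

/-- Absence of both patterns. -/
def OutOfPattern (pref : N → O → O → Prop) : Prop :=
  OutOfMainPattern pref ∧ OutOfSecondaryPattern pref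

/-- The preferences can be layered: there is an ordered partition of the
outcomes (given by a layer-index function) such that higher layers are
unanimously weakly preferred, and within a layer no two players agree on
one pair while disagreeing on another pair. -/
def CanBeLayered (pref : N → O → O → Prop) : Prop :=
  ∃ ℓ : O → ℕ,
    (∀ x y, ℓ x < ℓ y → ∀ i, ¬ pref i y x) ∧
    (∀ (i j : N) (w x y z : O), ℓ w = ℓ x → ℓ x = ℓ y → ℓ y = ℓ z →
      ¬ (pref i x y ∧ pref j x y ∧ pref i w z ∧ pref j z w))

end GameTree
end SeqGame

namespace SeqGame.GameTree

/-- Outcomes `x = 0`, `y = 1`, `z = 2`; players `1, 2, 3` with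
`x <₁ y <₁ z`, `y <₂ z ∼₂ x` and `y ∼₃ z <₃ x`. -/
def pat13 : Fin 3 → Fin 3 → Fin 3 → Prop := fun i a b =>
  if i = 0 then (a = 0 ∧ b = 1) ∨ (a = 0 ∧ b = 2) ∨ (a = 1 ∧ b = 2)
  else if i = 1 then a = 1 ∧ (b = 2 ∨ b = 0)
  else (a = 1 ∨ a = 2) ∧ b = 0

/-! The first two claims are finite checks. For the third, every pair of outcomes is ordered
in opposite directions by two players (`x <₁ y`, `y <₂ x` and `x <₁ z`, `z <₃ x`), so a layering
has to put all of `O` into a single layer; but in that layer players 1 and 2 agree on `y < z`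
and disagree on `x` versus `y`. -/

variable {N O : Type}

theorem layer_eq_of_opposed {pref : N → O → O → Prop} {ℓ : O → ℕ}
    (hℓ : ∀ x y, ℓ x < ℓ y → ∀ i, ¬ pref i y x) {i j : N} {x y : O}
    (hi : pref i x y) (hj : pref j y x) : ℓ x = ℓ y :=
  le_antisymm (not_lt.1 fun h => hℓ y x h i hi) (not_lt.1 fun h => hℓ x y h j hj)

instance instDecidablePat13 (i a b : Fin 3) : Decidable (pat13 i a b) := by
  unfold pat13; infer_instance

theorem isSWO_pat13 (i : Fin 3) : IsSWO (pat13 i) := by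
  revert i; unfold IsSWO Incomp; decide

theorem outOfPattern_pat13 : OutOfPattern pat13 := by
  unfold OutOfPattern OutOfMainPattern OutOfSecondaryPattern Incomp; decide

theorem not_canBeLayered_pat13 : ¬ CanBeLayered pat13 := by
  rintro ⟨ℓ, hℓ, hlayer⟩
  have hxy : ℓ 0 = ℓ 1 := layer_eq_of_opposed hℓ (i := 0) (j := 1) (by decide) (by decide)
  have hxz : ℓ 0 = ℓ 2 := layer_eq_of_opposed hℓ (i := 0) (j := 2) (by decide) (by decide)
  exact hlayer 0 1 0 1 2 1 hxy (hxy.symm.trans hxz) (hxz.symm.trans hxy) (by decide)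

/-- These three strict weak orders are out of pattern but cannot be layered. -/
theorem stmt_13 :
    (∀ i, IsSWO (pat13 i)) ∧ OutOfPattern pat13 ∧ ¬ CanBeLayered pat13 :=
  ⟨isSWO_pat13, outOfPattern_pat13, not_canBeLayered_pat13⟩

end SeqGame.GameTree
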